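/- arXiv:2005.07871 — 4 statements merged into one kernel-verified Lean document; each statement's English description precedes it below -/
import Mathlib

section
/- Let Z be a z×z real matrix and Q a z×z symmetric positive semidefinite real matrix such that the pair (Z, √Q) is controllable, i.e., the matrix [√Q, Z√Q, …, Z^(z−1)√Q] has full row rank z. If λ is a nonzero eigenvalue of Z and P_λ is the spectral projection onto the generalized eigenspace of λ, then for every i ∈ ℕ₀, Z^i P_λ √Q ≠ 0. -/
/-!
If `Z ^ i * P * √Q = 0`, then already `P * √Q = 0`: since `(Z - λ) ^ z * P = 0` and `λ ≠ 0`,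
the constant term of `(X - λ) ^ z` is nonzero, which yields a polynomial `r` with
`Z * r(Z) * P = P`, i.e. `Z` is invertible on the range of `P`. As `P` commutes with `Z`, it then
annihilates every block `Z ^ k * √Q` of the controllability matrix, which has a right inverse by
full row rank; so `P = 0`, contradicting `P v = v` for an eigenvector `v` of `λ`.
-/

/-- The square root of a positive semidefinite matrix, as defined in the older Mathlib
(`Matrix.PosSemidef.sqrt`, removed since). -/
noncomputable def Matrix.PosSemidef.sqrt {n : Type*} [Fintype n] [DecidableEq n]
    {A : Matrix n n ℝ} (hA : A.PosSemidef) : Matrix n n ℝ :=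
  hA.1.eigenvectorUnitary.1 * Matrix.diagonal ((↑) ∘ (fun x : ℝ => Real.sqrt x) ∘ hA.1.eigenvalues) *
    (star hA.1.eigenvectorUnitary : Matrix n n ℝ)

open Polynomial in
/-- Writing `(X - μ) ^ n = X * q + (-μ) ^ n`, the element `r = -q(a) / (-μ) ^ n` inverts `a` on
the range of `p`. -/
theorem exists_commute_mul_mul_eq_of_pow_sub_smul_mul_eq_zero {K A : Type*} [Field K] [Ring A]
    [Algebra K A] {a p : A} {μ : K} (hμ : μ ≠ 0) {n : ℕ} (h : (a - μ • 1) ^ n * p = 0) :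
    ∃ r : A, Commute a r ∧ a * r * p = p := by
  obtain ⟨q, hq⟩ := X_dvd_sub_C (p := (X - C μ) ^ n)
  have hcoeff : ((X - C μ) ^ n).coeff 0 = (-μ) ^ n := by simp [coeff_zero_eq_eval_zero]
  have hsplit : (a - μ • 1) ^ n = a * aeval a q + (-μ) ^ n • 1 := by
    have := congrArg (aeval a) (eq_add_of_sub_eq hq)
    simpa only [hcoeff, map_add, map_mul, map_pow, map_sub, aeval_X, aeval_C,
      Algebra.algebraMap_eq_smul_one, _root_.smul_pow, one_pow] using this
  refine ⟨-((-μ) ^ n)⁻¹ • aeval a q, ?_, ?_⟩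
  · simpa using ((Commute.all X q).map (aeval a)).smul_right (-((-μ) ^ n)⁻¹)
  · rw [hsplit, add_mul, smul_mul_assoc, one_mul, add_eq_zero_iff_neg_eq] at h
    rw [mul_smul_comm, smul_mul_assoc, neg_smul, ← smul_neg, h,
      inv_smul_smul₀ (pow_ne_zero _ (neg_ne_zero.2 hμ))]

theorem mul_eq_zero_of_pow_mul_mul_eq_zero {K A : Type*} [Field K] [Ring A] [Algebra K A]
    {a p s : A} {μ : K} (hμ : μ ≠ 0) {n : ℕ} (h : (a - μ • 1) ^ n * p = 0) {i : ℕ}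
    (hs : a ^ i * p * s = 0) : p * s = 0 := by
  obtain ⟨r, har, hp⟩ := exists_commute_mul_mul_eq_of_pow_sub_smul_mul_eq_zero hμ h
  have hpow : ∀ j : ℕ, (a * r) ^ j * p = p := by
    intro j
    induction j with
    | zero => simp
    | succ k ih => rw [pow_succ', mul_assoc, ih, hp]
  calc p * s = (a * r) ^ i * p * s := by rw [hpow]
    _ = r ^ i * (a ^ i * p * s) := by
      rw [har.mul_pow, (har.pow_pow i i).eq, mul_assoc, mul_assoc, mul_assoc]
    _ = 0 := by rw [hs, mul_zero]

namespace Matrix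

section Field

variable {m n K : Type*} [Fintype m] [Fintype n] [DecidableEq m] [Field K]

theorem exists_mul_eq_one_of_rank_eq_card {A : Matrix m n K} (hA : A.rank = Fintype.card m) :
    ∃ D : Matrix n m K, A * D = 1 := by
  classical
  have hsurj : LinearMap.range A.mulVecLin = ⊤ := by
    apply Submodule.eq_top_of_finrank_eq
    rw [← rank, hA, Module.finrank_fintype_fun_eq_card]
  obtain ⟨g, hg⟩ := A.mulVecLin.exists_rightInverse_of_surjective hsurj
  refine ⟨LinearMap.toMatrix' g, ?_⟩
  rw [← LinearMap.toMatrix'_toLin' A, ← LinearMap.toMatrix'_comp, toLin'_apply', hg,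
    LinearMap.toMatrix'_id]

theorem eq_zero_of_mul_map_eq_zero {l R : Type*} [Fintype l] [Semiring R] {f : K →+* R}
    {C : Matrix m n K} (hC : C.rank = Fintype.card m) {X : Matrix l m R}
    (hX : X * C.map f = 0) : X = 0 := by
  obtain ⟨D, hD⟩ := exists_mul_eq_one_of_rank_eq_card hC
  have hmap : C.map f * D.map f = 1 := by
    rw [← Matrix.map_mul, hD, Matrix.map_one f f.map_zero f.map_one]
  rw [← X.mul_one, ← hmap, ← Matrix.mul_assoc, hX, Matrix.zero_mul]

theorem ne_zero_of_mulVec_eq_self_of_mem_spectrum {M P : Matrix m m K} {μ : K}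
    (hμ : μ ∈ spectrum K M)
    (hP : ∀ v : m → K, ((M - μ • 1) ^ Fintype.card m) *ᵥ v = 0 → P *ᵥ v = v) : P ≠ 0 := by
  have hdet : (algebraMap K (Matrix m m K) μ - M).det = 0 := by
    by_contra h
    exact spectrum.mem_iff.mp hμ ((isUnit_iff_isUnit_det _).mpr (isUnit_iff_ne_zero.mpr h))
  obtain ⟨v, hv0, hv⟩ := exists_mulVec_eq_zero_iff.mpr hdet
  have heig : (M - μ • 1) *ᵥ v = 0 := by
    rw [← neg_sub, ← Algebra.algebraMap_eq_smul_one, neg_mulVec, hv, neg_zero]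
  obtain ⟨j, -⟩ := Function.ne_iff.mp hv0
  obtain ⟨k, hk⟩ := Nat.exists_eq_succ_of_ne_zero (Fintype.card_pos_iff.mpr ⟨j⟩).ne'
  have hPv : P *ᵥ v = v := hP v (by rw [hk, pow_succ, ← mulVec_mulVec, heig, mulVec_zero])
  rintro rfl
  exact hv0 (by rw [← hPv, zero_mulVec])

end Field

section Controllability

variable {n m R S : Type*} [Fintype n] [DecidableEq n] [Semiring R] [Semiring S]

def controllabilityMatrix (A : Matrix n n R) (B : Matrix n m R) (k : ℕ) :
    Matrix n (Fin k × m) R :=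
  of fun j p => (A ^ (p.1 : ℕ) * B) j p.2

theorem controllabilityMatrix_map (A : Matrix n n R) (B : Matrix n m R) (k : ℕ)
    (f : R →+* S) :
    (controllabilityMatrix A B k).map f = controllabilityMatrix (A.map f) (B.map f) k := by
  ext j p
  rw [map_apply, controllabilityMatrix, controllabilityMatrix, of_apply, of_apply,
    ← Matrix.map_pow, ← Matrix.map_mul, map_apply]

theorem mul_controllabilityMatrix_eq_zero {A X : Matrix n n R} {B : Matrix n m R}
    (hXA : Commute X A) (hXB : X * B = 0) (k : ℕ) : X * controllabilityMatrix A B k = 0 := by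
  have hcol : ∀ i : ℕ, X * (A ^ i * B) = 0 := fun i => by
    rw [← Matrix.mul_assoc, (hXA.pow_right i).eq, Matrix.mul_assoc, hXB, Matrix.mul_zero]
  ext j p
  simpa [mul_apply, controllabilityMatrix] using congrFun (congrFun (hcol p.1) j) p.2

end Controllability

end Matrix

theorem stmt_2_general {z : ℕ} (Z Q : Matrix (Fin z) (Fin z) ℝ) (hQ : Q.PosSemidef)
    (hctrb : (Matrix.of fun (j : Fin z) (p : Fin z × Fin z) =>
        (Z ^ (p.1 : ℕ) * hQ.sqrt) j p.2).rank = z)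
    (lam : ℂ) (hlam : lam ∈ spectrum ℂ (Z.map Complex.ofReal)) (hlam0 : lam ≠ 0)
    (P : Matrix (Fin z) (Fin z) ℂ)
    (hPcomm : Z.map Complex.ofReal * P = P * Z.map Complex.ofReal)
    (hPrange : (Z.map Complex.ofReal - lam • 1) ^ z * P = 0)
    (hPfix : ∀ v : Fin z → ℂ,
      ((Z.map Complex.ofReal - lam • 1) ^ z).mulVec v = 0 → P.mulVec v = v) :
    ∀ i : ℕ, (Z.map Complex.ofReal) ^ i * P * hQ.sqrt.map Complex.ofReal ≠ 0 := by
  intro i hi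
  have hPS : P * hQ.sqrt.map Complex.ofReal = 0 :=
    mul_eq_zero_of_pow_mul_mul_eq_zero hlam0 hPrange hi
  have hPC : P * (Matrix.controllabilityMatrix Z hQ.sqrt z).map Complex.ofRealHom = 0 := by
    rw [Matrix.controllabilityMatrix_map]
    exact Matrix.mul_controllabilityMatrix_eq_zero hPcomm.symm hPS z
  refine Matrix.ne_zero_of_mulVec_eq_self_of_mem_spectrum hlam (by rw [Fintype.card_fin]; exact hPfix) ?_
  exact Matrix.eq_zero_of_mul_map_eq_zero (by rw [Fintype.card_fin]; exact hctrb) hPC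

theorem stmt_2 {z : ℕ} (Z Q : Matrix (Fin z) (Fin z) ℝ) (hQ : Q.PosSemidef)
    (hctrb : (Matrix.of fun (j : Fin z) (p : Fin z × Fin z) =>
        (Z ^ (p.1 : ℕ) * hQ.sqrt) j p.2).rank = z)
    (lam : ℂ) (hlam : lam ∈ spectrum ℂ (Z.map Complex.ofReal)) (hlam0 : lam ≠ 0)
    (P : Matrix (Fin z) (Fin z) ℂ)
    (hPproj : P * P = P)
    (hPcomm : Z.map Complex.ofReal * P = P * Z.map Complex.ofReal)
    (hPrange : (Z.map Complex.ofReal - lam • 1) ^ z * P = 0)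
    (hPfix : ∀ v : Fin z → ℂ,
      ((Z.map Complex.ofReal - lam • 1) ^ z).mulVec v = 0 → P.mulVec v = v) :
    ∀ i : ℕ, (Z.map Complex.ofReal) ^ i * P * hQ.sqrt.map Complex.ofReal ≠ 0 :=
  stmt_2_general Z Q hQ hctrb lam hlam hlam0 P hPcomm hPrange hPfix
end

section
/- Let λ₁, …, λ_r be distinct complex numbers all of absolute value ρ > 0, and let b = (b₁, …, b_r) be a nonzero complex vector. Then there exists c > 0 such that for every i ∈ ℕ, max over l' ∈ {0,…,r−1} of |∑_{l=1}^{r} b_l λ_l^(i+l')| ≥ c·ρ^i. -/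
theorem stmt_4 {r : ℕ} (lam : Fin r → ℂ) (ρ : ℝ) (hρ : 0 < ρ)
    (habs : ∀ l, ‖lam l‖ = ρ) (hdist : Function.Injective lam)
    (b : Fin r → ℂ) (hb : b ≠ 0) :
    ∃ c : ℝ, 0 < c ∧ ∀ i : ℕ, ∃ l' : ℕ, l' < r ∧
      c * ρ ^ i ≤ ‖∑ l : Fin r, b l * lam l ^ (i + l')‖ := by
  obtain ⟨l0, hl0⟩ : ∃ l0, b l0 ≠ 0 := Function.ne_iff.mp hb
  set A : Matrix (Fin r) (Fin r) ℂ := (Matrix.vandermonde lam).transpose with hA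
  have hdet : A.det ≠ 0 := by
    rw [hA, Matrix.det_transpose, Matrix.det_vandermonde]
    refine Finset.prod_ne_zero_iff.mpr fun i _ => Finset.prod_ne_zero_iff.mpr ?_
    intro j hj
    rw [Finset.mem_Ioi] at hj
    exact sub_ne_zero.mpr fun h => absurd (hdist h) (ne_of_gt hj)
  have hinv : IsUnit A.det := isUnit_iff_ne_zero.mpr hdet
  have hw : ∀ w : Fin r → ℂ, A⁻¹.mulVec (A.mulVec w) = w := by
    intro w
    rw [Matrix.mulVec_mulVec, Matrix.nonsing_inv_mul _ hinv, Matrix.one_mulVec]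
  set S : ℝ := ∑ l', ‖A⁻¹ l0 l'‖ with hS
  have hSnn : 0 ≤ S := Finset.sum_nonneg fun _ _ => norm_nonneg _
  refine ⟨‖b l0‖ / (S + 1), div_pos (norm_pos_iff.mpr hl0) (by linarith), ?_⟩
  intro i
  set w : Fin r → ℂ := fun l => b l * lam l ^ i with hwdef
  have hne : (Finset.univ : Finset (Fin r)).Nonempty := ⟨l0, Finset.mem_univ _⟩
  obtain ⟨lm, _, hlm⟩ := Finset.exists_max_image Finset.univ
    (fun l' => ‖A.mulVec w l'‖) hne
  have hAv : ∀ l' : Fin r, A.mulVec w l' = ∑ l : Fin r, b l * lam l ^ (i + (l' : ℕ)) := by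
    intro l'
    simp only [Matrix.mulVec, dotProduct, hA, Matrix.transpose_apply,
      Matrix.vandermonde_apply, hwdef]
    refine Finset.sum_congr rfl fun l _ => ?_
    rw [pow_add]; ring
  refine ⟨lm, lm.isLt, ?_⟩
  rw [← hAv]
  have hM0 : 0 ≤ ‖A.mulVec w lm‖ := norm_nonneg _
  have key : ‖b l0‖ * ρ ^ i ≤ (S + 1) * ‖A.mulVec w lm‖ := by
    have h1 : ‖b l0‖ * ρ ^ i = ‖w l0‖ := by
      rw [hwdef]; simp [norm_mul, norm_pow, habs l0]
    have h2 : w l0 = ∑ l', A⁻¹ l0 l' * A.mulVec w l' := by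
      conv_lhs => rw [← hw w]
      rfl
    calc ‖b l0‖ * ρ ^ i = ‖∑ l', A⁻¹ l0 l' * A.mulVec w l'‖ := by rw [h1, h2]
      _ ≤ ∑ l', ‖A⁻¹ l0 l' * A.mulVec w l'‖ := norm_sum_le _ _
      _ ≤ ∑ l', ‖A⁻¹ l0 l'‖ * ‖A.mulVec w lm‖ := by
          refine Finset.sum_le_sum fun l' _ => ?_
          rw [norm_mul]
          exact mul_le_mul_of_nonneg_left (hlm l' (Finset.mem_univ _)) (norm_nonneg _)
      _ = S * ‖A.mulVec w lm‖ := by rw [← Finset.sum_mul]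
      _ ≤ (S + 1) * ‖A.mulVec w lm‖ := by nlinarith
  rw [div_mul_eq_mul_div, div_le_iff₀ (by linarith)]
  linarith [key]
end

section
/- Let Z be a nonnegative irreducible z×z matrix. Suppose for some indices j, k, some η > 0, some period l ∈ ℕ and some N, we have max_{l'∈{0,…,l−1}} [Z^(i+l')]_{j,k} ≥ η·ρ(Z)^i for all i ≥ N. Then for any index k', there exist η' > 0 and N' such that max_{l'∈{0,…,l−1}} [Z^(i+l')]_{j,k'} ≥ η'·ρ(Z)^i for all i ≥ N'. -/
noncomputable def specRad {n : ℕ} (Z : Matrix (Fin n) (Fin n) ℂ) : ℝ :=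
  ⨆ μ ∈ spectrum ℂ Z, ‖μ‖

noncomputable def specRadR {n : ℕ} (Z : Matrix (Fin n) (Fin n) ℝ) : ℝ :=
  specRad (Z.map Complex.ofReal)

def Irred {n : ℕ} (Z : Matrix (Fin n) (Fin n) ℝ) : Prop :=
  ∀ j k : Fin n, ∃ m : ℕ, 0 < m ∧ 0 < (Z ^ m) j k

/-! Proof idea: choose `m` with `[Z^m]_{k,k'} > 0`. Since `[Z^(i+m)]_{j,k'} ≥ [Z^i]_{j,k} [Z^m]_{k,k'}`,
the bound `η ρ^i` for the entry `(j,k)` yields the bound `(η [Z^m]_{k,k'} / ρ^m) ρ^i` for the entry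
`(j,k')` once `i ≥ N + m`. -/

namespace Matrix

variable {n R : Type*} [Fintype n] [DecidableEq n]

theorem pow_apply_mul_pow_apply_le [Semiring R] [PartialOrder R] [IsOrderedRing R]
    {A : Matrix n n R} (hA : ∀ i j, 0 ≤ A i j) (a b : ℕ) (i k j : n) :
    (A ^ a) i k * (A ^ b) k j ≤ (A ^ (a + b)) i j := by
  rw [pow_add, mul_apply]
  exact Finset.single_le_sum (f := fun c => (A ^ a) i c * (A ^ b) c j)
    (fun c _ => mul_nonneg (pow_apply_nonneg hA a i c) (pow_apply_nonneg hA b c j))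
    (Finset.mem_univ k)

theorem exists_periodic_pow_apply_lower_bound_of_pow_apply_pos
    [Field R] [LinearOrder R] [IsStrictOrderedRing R]
    {A : Matrix n n R} (hA : ∀ i j, 0 ≤ A i j) {r η : R} (hr : 0 < r) (hη : 0 < η)
    {j k k' : n} {m : ℕ} (hm : 0 < (A ^ m) k k') {l N : ℕ}
    (hlow : ∀ i, N ≤ i → ∃ l' < l, η * r ^ i ≤ (A ^ (i + l')) j k) :
    ∃ η' : R, 0 < η' ∧ ∃ N' : ℕ, ∀ i, N' ≤ i →
      ∃ l' < l, η' * r ^ i ≤ (A ^ (i + l')) j k' := by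
  refine ⟨η * (A ^ m) k k' / r ^ m, by positivity, N + m, fun i hi => ?_⟩
  obtain ⟨i, rfl⟩ := Nat.exists_eq_add_of_le' (le_of_add_le_right hi)
  obtain ⟨l', hl', hle⟩ := hlow i (by omega)
  refine ⟨l', hl', ?_⟩
  calc η * (A ^ m) k k' / r ^ m * r ^ (i + m)
      = η * r ^ i * (A ^ m) k k' := by
        rw [pow_add]; field_simp
    _ ≤ (A ^ (i + l')) j k * (A ^ m) k k' := by gcongr
    _ ≤ (A ^ (i + l' + m)) j k' := pow_apply_mul_pow_apply_le hA _ _ _ _ _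
    _ = (A ^ (i + m + l')) j k' := by rw [add_right_comm]

end Matrix

theorem stmt_9_general {z : ℕ} (Z : Matrix (Fin z) (Fin z) ℝ)
    (hZnn : ∀ i j, 0 ≤ Z i j) (hirr : Irred Z) (hρ : 0 < specRadR Z)
    (j k : Fin z) (η : ℝ) (hη : 0 < η) (l : ℕ) (N : ℕ)
    (hlow : ∀ i : ℕ, N ≤ i → ∃ l' : ℕ, l' < l ∧
      η * specRadR Z ^ i ≤ (Z ^ (i + l')) j k) :
    ∀ k' : Fin z, ∃ η' : ℝ, 0 < η' ∧ ∃ N' : ℕ, ∀ i : ℕ, N' ≤ i →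
      ∃ l' : ℕ, l' < l ∧ η' * specRadR Z ^ i ≤ (Z ^ (i + l')) j k' := by
  intro k'
  obtain ⟨m, -, hm⟩ := hirr k k'
  exact Matrix.exists_periodic_pow_apply_lower_bound_of_pow_apply_pos hZnn hρ hη hm hlow

theorem stmt_9 {z : ℕ} (Z : Matrix (Fin z) (Fin z) ℝ)
    (hZnn : ∀ i j, 0 ≤ Z i j) (hirr : Irred Z) (hρ : 0 < specRadR Z)
    (j k : Fin z) (η : ℝ) (hη : 0 < η) (l : ℕ) (hl : 0 < l) (N : ℕ)
    (hlow : ∀ i : ℕ, N ≤ i → ∃ l' : ℕ, l' < l ∧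
      η * specRadR Z ^ i ≤ (Z ^ (i + l')) j k) :
    ∀ k' : Fin z, ∃ η' : ℝ, 0 < η' ∧ ∃ N' : ℕ, ∀ i : ℕ, N' ≤ i →
      ∃ l' : ℕ, l' < l ∧ η' * specRadR Z ^ i ≤ (Z ^ (i + l')) j k' :=
  stmt_9_general Z hZnn hirr hρ j k η hη l N hlow
end

section
/- Let M be an M×M row-stochastic irreducible matrix and D = diag(d₁,…,d_M) with d_i ∈ [0,1], D ≠ 0 and D ≠ I, and assume ρ(DM) > 0. Then there exist η > 0, indices j, k ∈ {1,…,M}, a period l ∈ ℕ and N ∈ ℕ such that for all i ≥ N, max_{l'∈{0,…,l−1}} [(DM)^(i+l') (I−D)M]_{j,k} ≥ η·ρ(DM)^i. -/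
/-!
Let `B = DM` and `ρ = ρ(B) > 0`. For an eigenvalue `μ` with `‖μ‖ = ρ` and eigenvector `z`, the
vector `u = |z|` is nonnegative and subinvariant: `ρ u ≤ B u`. Pick a state `x` in a terminal
class of the graph `i → j` (`B i j > 0`, `u j > 0`) and cut `u` down to the states reachable
from `x`; the cut vector is still subinvariant, and every state of its support returns to `x`
in fewer than `l` steps. Iterating `ρ u ≤ B u` then bounds the window sums
`∑_{a < l} (B ^ (n + a)) x x` below by a multiple of `ρ ^ n`. Finally irreducibility of `M`
leads from `x`, along positive entries of `B`, to a state `q` with `d q < 1`, and one step of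
`(I - D) M` from `q` reaches some `k`; prefixing this path with the returns to `x` proves the
bound for `j = x`.
-/

open Matrix Finset Filter Topology Relation

lemma Relation.exists_reflTransGen_terminal {α : Type*} [Finite α] (r : α → α → Prop) (x₀ : α) :
    ∃ x, ReflTransGen r x₀ x ∧ ∀ y, ReflTransGen r x y → ReflTransGen r y x := by
  classical
  have := Fintype.ofFinite α
  let reach : α → Finset α := fun x => univ.filter (ReflTransGen r x)
  obtain ⟨x, hx₀x, hmin⟩ := (univ.filter (ReflTransGen r x₀)).exists_min_image
    (fun x => (reach x).card) ⟨x₀, mem_filter.2 ⟨mem_univ _, .refl⟩⟩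
  refine ⟨x, by simpa using hx₀x, fun y hxy => ?_⟩
  have hsub : reach y ⊆ reach x := fun z hz => by
    simp only [reach, mem_filter, mem_univ, true_and] at hz ⊢
    exact hxy.trans hz
  have hy : y ∈ univ.filter (ReflTransGen r x₀) := by
    simp only [mem_filter, mem_univ, true_and] at hx₀x ⊢
    exact hx₀x.trans hxy
  have hx : x ∈ reach y := by
    rw [Finset.eq_of_subset_of_card_le hsub (hmin y hy)]
    exact mem_filter.2 ⟨mem_univ _, .refl⟩
  exact (mem_filter.1 hx).2

lemma exists_pos_smul_le {ι : Type*} [Finite ι] {u f : ι → ℝ} (hf : 0 ≤ f)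
    (hpos : ∀ i, 0 < u i → 0 < f i) : ∃ κ : ℝ, 0 < κ ∧ κ • u ≤ f := by
  have hev : ∀ i, ∀ᶠ κ in 𝓝[>] (0 : ℝ), κ * u i ≤ f i := by
    intro i
    rcases (hf i).lt_or_eq with hfi | hfi
    · have hlim : Tendsto (fun κ : ℝ => κ * u i) (𝓝[>] 0) (𝓝 0) := by
        simpa using ((continuous_mul_const (u i)).tendsto 0).mono_left nhdsWithin_le_nhds
      exact (hlim.eventually (gt_mem_nhds hfi)).mono fun _ => le_of_lt
    · have hui : u i ≤ 0 := not_lt.mp fun h => (hpos i h).ne' hfi.symm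
      filter_upwards [self_mem_nhdsWithin] with κ (hκ : 0 < κ)
      rw [← hfi]
      exact mul_nonpos_of_nonneg_of_nonpos hκ.le hui
  obtain ⟨κ, hκ, hκ0⟩ := ((eventually_all.2 hev).and self_mem_nhdsWithin).exists
  exact ⟨κ, hκ0, hκ⟩

namespace Matrix

variable {ι : Type*} [Fintype ι] {B : Matrix ι ι ℝ}

lemma apply_mul_apply_le_mul_apply {X Y : Matrix ι ι ℝ} (hX : ∀ i j, 0 ≤ X i j)
    (hY : ∀ i j, 0 ≤ Y i j) (i q k : ι) : X i q * Y q k ≤ (X * Y) i k :=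
  single_le_sum (f := fun j => X i j * Y j k) (fun j _ => mul_nonneg (hX i j) (hY j k))
    (mem_univ q)

lemma mulVec_mono_of_nonneg (hB : ∀ i j, 0 ≤ B i j) {v w : ι → ℝ} (h : v ≤ w) :
    B *ᵥ v ≤ B *ᵥ w := fun i =>
  sum_le_sum fun j _ => mul_le_mul_of_nonneg_left (h j) (hB i j)

lemma smul_indicator_le_mulVec_indicator (hB : ∀ i j, 0 ≤ B i j) {ρ : ℝ} {u : ι → ℝ}
    (hu : 0 ≤ u) (hsub : ρ • u ≤ B *ᵥ u) {S : Set ι}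
    (hS : ∀ i ∈ S, ∀ j, 0 < B i j → 0 < u j → j ∈ S) :
    ρ • S.indicator u ≤ B *ᵥ S.indicator u := by
  intro i
  by_cases hi : i ∈ S
  · have hterm : ∀ j, B i j * S.indicator u j = B i j * u j := fun j => by
      by_cases hj : j ∈ S
      · rw [Set.indicator_of_mem hj]
      · rw [Set.indicator_of_notMem hj]
        rcases (hB i j).lt_or_eq with hBij | hBij
        · rw [le_antisymm (not_lt.1 fun huj => hj (hS i hi j hBij huj)) (hu j), mul_zero]
        · rw [← hBij, zero_mul, zero_mul]
    simpa only [Pi.smul_apply, Set.indicator_of_mem hi, mulVec, dotProduct, hterm] using hsub i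
  · simp only [Pi.smul_apply, Set.indicator_of_notMem hi, smul_zero]
    exact sum_nonneg fun j _ => mul_nonneg (hB i j) (Set.indicator_nonneg (fun j _ => hu j) j)

lemma smul_norm_le_mulVec_norm (hB : ∀ i j, 0 ≤ B i j) {μ : ℂ} {z : ι → ℂ}
    (hz : B.map Complex.ofReal *ᵥ z = μ • z) : ‖μ‖ • (‖z ·‖) ≤ B *ᵥ (‖z ·‖) := fun i =>
  calc ‖μ‖ * ‖z i‖ = ‖∑ j, (B i j : ℂ) * z j‖ := by
        rw [← norm_mul, ← smul_eq_mul, ← Pi.smul_apply, ← hz]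
        rfl
    _ ≤ ∑ j, ‖(B i j : ℂ) * z j‖ := norm_sum_le _ _
    _ = ∑ j, B i j * ‖z j‖ := by
        simp only [norm_mul, Complex.norm_real, Real.norm_of_nonneg (hB i _)]

variable [DecidableEq ι]

lemma exists_pow_apply_pos_of_reflTransGen (hB : ∀ i j, 0 ≤ B i j) {r : ι → ι → Prop}
    (hr : ∀ i j, r i j → 0 < B i j) {i j : ι} (h : ReflTransGen r i j) :
    ∃ t, 0 < (B ^ t) i j := by
  induction h with
  | refl => exact ⟨0, by simp⟩
  | @tail b c _ hbc ih =>
    obtain ⟨t, ht⟩ := ih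
    refine ⟨t + 1, (mul_pos ht (hr b c hbc)).trans_le ?_⟩
    rw [pow_succ]
    exact apply_mul_apply_le_mul_apply (pow_apply_nonneg hB t) hB i b c

lemma reflTransGen_of_pow_apply_pos (hB : ∀ i j, 0 ≤ B i j) {t : ℕ} {i j : ι}
    (h : 0 < (B ^ t) i j) : ReflTransGen (fun a b => 0 < B a b) i j := by
  induction t generalizing j with
  | zero =>
    obtain rfl : i = j := by by_contra hij; simp [one_apply_ne hij] at h
    rfl
  | succ t ih =>
    rw [pow_succ, mul_apply] at h
    obtain ⟨q, -, hq⟩ := (sum_pos_iff_of_nonneg fun q _ =>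
      mul_nonneg (pow_apply_nonneg hB t i q) (hB q j)).mp h
    exact (ih (pos_of_mul_pos_left hq (hB q j))).tail
      (pos_of_mul_pos_right hq (pow_apply_nonneg hB t i q))

lemma pow_smul_le_pow_mulVec (hB : ∀ i j, 0 ≤ B i j) {ρ : ℝ} (hρ : 0 ≤ ρ) {u : ι → ℝ}
    (hsub : ρ • u ≤ B *ᵥ u) (n : ℕ) : ρ ^ n • u ≤ (B ^ n) *ᵥ u := by
  induction n with
  | zero => simp
  | succ n ih =>
    calc ρ ^ (n + 1) • u = ρ ^ n • ρ • u := by rw [pow_succ, mul_smul]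
      _ ≤ ρ ^ n • (B *ᵥ u) := smul_le_smul_of_nonneg_left hsub (pow_nonneg hρ n)
      _ = B *ᵥ (ρ ^ n • u) := (mulVec_smul B _ u).symm
      _ ≤ B *ᵥ ((B ^ n) *ᵥ u) := mulVec_mono_of_nonneg hB ih
      _ = (B ^ (n + 1)) *ᵥ u := by rw [mulVec_mulVec, pow_succ']

lemma exists_pow_add_apply_ge_of_returns (hB : ∀ i j, 0 ≤ B i j) {ρ : ℝ}
    (hρ : 0 ≤ ρ) {u : ι → ℝ} (hsub : ρ • u ≤ B *ᵥ u) {x : ι} (hx : 0 < u x)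
    (hret : ∀ q, 0 < u q → ∃ a, 0 < (B ^ a) q x) :
    ∃ δ : ℝ, 0 < δ ∧ ∃ l, ∀ n, ∃ a < l, δ * ρ ^ n ≤ (B ^ (n + a)) x x := by
  choose! a ha using hret
  obtain ⟨L, hL⟩ := Finite.exists_le a
  set ret : ι → ℝ := fun q => ∑ b ∈ range (L + 1), (B ^ b) q x
  have hret_nonneg : 0 ≤ ret := fun q => sum_nonneg fun b _ => pow_apply_nonneg hB b q x
  have hret_pos : ∀ q, 0 < u q → 0 < ret q := fun q hq =>
    (ha q hq).trans_le <| single_le_sum (fun b _ => pow_apply_nonneg hB b q x)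
      (mem_range.2 (Nat.lt_succ_of_le (hL q)))
  obtain ⟨κ, hκ, hκu⟩ := exists_pos_smul_le hret_nonneg hret_pos
  have hwindow : ∀ n, κ * u x * ρ ^ n ≤ ∑ b ∈ range (L + 1), (B ^ (n + b)) x x := fun n =>
    calc κ * u x * ρ ^ n = κ * (ρ ^ n • u) x := by simp only [Pi.smul_apply, smul_eq_mul]; ring
      _ ≤ κ * ((B ^ n) *ᵥ u) x :=
          mul_le_mul_of_nonneg_left (pow_smul_le_pow_mulVec hB hρ hsub n x) hκ.le
      _ = ((B ^ n) *ᵥ (κ • u)) x := by rw [mulVec_smul]; rfl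
      _ ≤ ((B ^ n) *ᵥ ret) x := mulVec_mono_of_nonneg (pow_apply_nonneg hB n) hκu x
      _ = ∑ b ∈ range (L + 1), (B ^ (n + b)) x x := by
          simp only [ret, mulVec, dotProduct, pow_add, mul_apply, mul_sum]
          exact sum_comm
  refine ⟨κ * u x / (L + 1), by positivity, L + 1, fun n => ?_⟩
  obtain ⟨b, hb, hle⟩ := exists_le_of_sum_le nonempty_range_add_one
    (f := fun _ => κ * u x / (L + 1) * ρ ^ n) (g := fun b => (B ^ (n + b)) x x) (by
      rw [sum_const, card_range, nsmul_eq_mul]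
      refine le_of_eq_of_le ?_ (hwindow n)
      push_cast
      field_simp)
  exact ⟨b, mem_range.1 hb, hle⟩

lemma exists_pow_add_apply_ge_of_subinvariant (hB : ∀ i j, 0 ≤ B i j) {ρ : ℝ}
    (hρ : 0 ≤ ρ) {u : ι → ℝ} (hu : 0 ≤ u) (hu0 : u ≠ 0) (hsub : ρ • u ≤ B *ᵥ u) :
    ∃ x, ∃ δ : ℝ, 0 < δ ∧ ∃ l, ∀ n, ∃ a < l, δ * ρ ^ n ≤ (B ^ (n + a)) x x := by
  let E : ι → ι → Prop := fun i j => 0 < B i j ∧ 0 < u j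
  obtain ⟨x₀, hx₀⟩ : ∃ i, 0 < u i := by
    by_contra! h
    exact hu0 (funext fun i => le_antisymm (h i) (hu i))
  obtain ⟨x, hx₀x, hx⟩ := Relation.exists_reflTransGen_terminal E x₀
  have hux : 0 < u x := by
    rcases hx₀x.cases_tail with rfl | ⟨c, -, -, h⟩
    exacts [hx₀, h]
  let S : Set ι := {y | ReflTransGen E x y}
  have hS : ∀ i ∈ S, ∀ j, 0 < B i j → 0 < u j → j ∈ S := fun i hi j hij huj =>
    ReflTransGen.tail hi ⟨hij, huj⟩
  have huSx : 0 < S.indicator u x := by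
    rwa [Set.indicator_of_mem (show x ∈ S from ReflTransGen.refl)]
  refine ⟨x, exists_pow_add_apply_ge_of_returns hB hρ
    (smul_indicator_le_mulVec_indicator hB hu hsub hS) huSx fun q hq => ?_⟩
  have hqS : q ∈ S := by
    by_contra h
    rw [Set.indicator_of_notMem h] at hq
    exact hq.false
  exact exists_pow_apply_pos_of_reflTransGen hB (fun _ _ h => h.1) (hx q hqS)

lemma diagonal_mul_nonneg {M : Matrix ι ι ℝ} {d : ι → ℝ} (hM : ∀ i j, 0 ≤ M i j)
    (hd : ∀ i, 0 ≤ d i) (i j : ι) : 0 ≤ (diagonal d * M) i j := by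
  rw [diagonal_mul]
  exact mul_nonneg (hd i) (hM i j)

lemma one_sub_diagonal_mul_apply (M : Matrix ι ι ℝ) (d : ι → ℝ) (i j : ι) :
    ((1 - diagonal d) * M) i j = (1 - d i) * M i j := by
  simp [sub_mul, diagonal_mul]

lemma one_sub_diagonal_mul_nonneg {M : Matrix ι ι ℝ} {d : ι → ℝ}
    (hM : ∀ i j, 0 ≤ M i j) (hd : ∀ i, d i ≤ 1) (i j : ι) : 0 ≤ ((1 - diagonal d) * M) i j := by
  rw [one_sub_diagonal_mul_apply]
  exact mul_nonneg (sub_nonneg.2 (hd i)) (hM i j)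

lemma exists_pow_diagonal_mul_mul_apply_pos {M : Matrix ι ι ℝ} {d : ι → ℝ}
    (hM : ∀ i j, 0 ≤ M i j) (hrow : ∀ i, ∑ j, M i j = 1) (hd : ∀ i, 0 ≤ d i ∧ d i ≤ 1)
    {x y : ι} (hxy : ReflTransGen (fun a b => 0 < M a b) x y) (hy : d y ≠ 1) :
    ∃ t k, 0 < ((diagonal d * M) ^ t * ((1 - diagonal d) * M) : Matrix ι ι ℝ) x k := by
  obtain ⟨q, hq, hxq⟩ : ∃ q, d q ≠ 1 ∧ ReflTransGen (fun a b => 0 < (diagonal d * M) a b) x q := by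
    -- Where `d = 1`, the positive entries of `DM` are those of `M`.
    by_contra! hno
    refine hno y hy ?_
    clear hy
    induction hxy with
    | refl => rfl
    | @tail b c _ hbc ih =>
      have hb : d b = 1 := by
        by_contra hb
        exact hno b hb ih
      exact ih.tail (by simpa [diagonal_mul, hb] using hbc)
  have hB := diagonal_mul_nonneg hM fun i => (hd i).1
  obtain ⟨t, ht⟩ := exists_pow_apply_pos_of_reflTransGen hB (fun _ _ h => h) hxq
  obtain ⟨k, -, hk⟩ := (sum_pos_iff_of_nonneg fun k _ => hM q k).mp (by rw [hrow q]; exact one_pos)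
  have hCqk : 0 < ((1 - diagonal d) * M) q k := by
    rw [one_sub_diagonal_mul_apply]
    exact mul_pos (sub_pos.2 ((hd q).2.lt_of_ne hq)) hk
  exact ⟨t, k, (mul_pos ht hCqk).trans_le <| apply_mul_apply_le_mul_apply (pow_apply_nonneg hB t)
    (one_sub_diagonal_mul_nonneg hM fun i => (hd i).2) x q k⟩

lemma exists_pow_add_mul_apply_ge (hB : ∀ i j, 0 ≤ B i j) {W : Matrix ι ι ℝ}
    (hW : ∀ i j, 0 ≤ W i j) {ρ δ : ℝ} (hρ : 0 < ρ) (hδ : 0 < δ) {x k : ι} {t l : ℕ}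
    (hwin : ∀ n, ∃ a < l, δ * ρ ^ n ≤ (B ^ (n + a)) x x) (hxk : 0 < (B ^ t * W) x k) :
    ∃ η, 0 < η ∧ ∀ i, t ≤ i → ∃ a < l, η * ρ ^ i ≤ (B ^ (i + a) * W) x k := by
  refine ⟨δ * (B ^ t * W) x k / ρ ^ t, by positivity, fun i hi => ?_⟩
  obtain ⟨a, hal, ha⟩ := hwin (i - t)
  have hBtW : ∀ i j, 0 ≤ (B ^ t * W) i j := fun i j =>
    sum_nonneg fun q _ => mul_nonneg (pow_apply_nonneg hB t i q) (hW q j)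
  refine ⟨a, hal, ?_⟩
  calc δ * (B ^ t * W) x k / ρ ^ t * ρ ^ i = δ * ρ ^ (i - t) * (B ^ t * W) x k := by
        rw [← pow_sub_mul_pow ρ hi]
        field_simp
    _ ≤ (B ^ (i - t + a)) x x * (B ^ t * W) x k := mul_le_mul_of_nonneg_right ha hxk.le
    _ ≤ (B ^ (i - t + a) * (B ^ t * W)) x k :=
        apply_mul_apply_le_mul_apply (pow_apply_nonneg hB _) hBtW x x k
    _ = (B ^ (i + a) * W) x k := by
        rw [← Matrix.mul_assoc, ← pow_add, show i - t + a + t = i + a by omega]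

lemma exists_mulVec_eq_smul_of_mem_spectrum {K : Type*} [Field K]
    {Z : Matrix ι ι K} {μ : K} (hμ : μ ∈ spectrum K Z) : ∃ z ≠ 0, Z *ᵥ z = μ • z := by
  rw [← spectrum_toLin', ← Module.End.hasEigenvalue_iff_mem_spectrum] at hμ
  obtain ⟨z, hz, hz0⟩ := hμ.exists_hasEigenvector
  exact ⟨z, hz0, by simpa using Module.End.mem_eigenspace_iff.mp hz⟩

end Matrix

lemma exists_mem_spectrum_specRad_le {n : ℕ} {Z : Matrix (Fin n) (Fin n) ℂ}
    (h : 0 < specRad Z) : ∃ μ ∈ spectrum ℂ Z, specRad Z ≤ ‖μ‖ := by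
  have hne : (spectrum ℂ Z).Nonempty := by
    by_contra hempty
    rw [Set.not_nonempty_iff_eq_empty] at hempty
    simp [specRad, hempty] at h
  obtain ⟨μ, hμ, hmax⟩ := Set.exists_max_image _ (‖·‖) Z.finite_spectrum hne
  exact ⟨μ, hμ, Real.iSup_le (fun ν => Real.iSup_le (hmax ν) (norm_nonneg μ)) (norm_nonneg μ)⟩

lemma exists_subinvariant_of_specRadR_pos {n : ℕ} {B : Matrix (Fin n) (Fin n) ℝ}
    (hB : ∀ i j, 0 ≤ B i j) (h : 0 < specRadR B) :
    ∃ u, 0 ≤ u ∧ u ≠ 0 ∧ specRadR B • u ≤ B *ᵥ u := by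
  obtain ⟨μ, hμ, hρμ⟩ := exists_mem_spectrum_specRad_le h
  obtain ⟨z, hz0, hz⟩ := exists_mulVec_eq_smul_of_mem_spectrum hμ
  refine ⟨(‖z ·‖), fun i => norm_nonneg (z i), fun h0 => hz0 (funext fun i => ?_),
    (smul_le_smul_of_nonneg_right hρμ fun i => norm_nonneg (z i)).trans
      (smul_norm_le_mulVec_norm hB hz)⟩
  exact norm_eq_zero.mp (congrFun h0 i)

theorem stmt_10_general {m : ℕ} (M : Matrix (Fin m) (Fin m) ℝ)
    (hMnn : ∀ i j, 0 ≤ M i j) (hrow : ∀ i, ∑ j, M i j = 1) (hirr : Irred M)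
    (d : Fin m → ℝ) (hd : ∀ i, 0 ≤ d i ∧ d i ≤ 1)
    (hDI : ∃ i, d i ≠ 1)
    (hρ : 0 < specRadR (Matrix.diagonal d * M)) :
    ∃ η : ℝ, 0 < η ∧ ∃ j k : Fin m, ∃ l : ℕ, 0 < l ∧ ∃ N : ℕ,
      ∀ i : ℕ, N ≤ i → ∃ l' : ℕ, l' < l ∧
        η * specRadR (Matrix.diagonal d * M) ^ i ≤
          ((Matrix.diagonal d * M) ^ (i + l') *
            ((1 - Matrix.diagonal d) * M)) j k := by
  have hB := diagonal_mul_nonneg hMnn fun i => (hd i).1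
  obtain ⟨u, hu, hu0, hsub⟩ := exists_subinvariant_of_specRadR_pos hB hρ
  obtain ⟨x, δ, hδ, l, hwin⟩ := exists_pow_add_apply_ge_of_subinvariant hB hρ.le hu hu0 hsub
  obtain ⟨y, hy⟩ := hDI
  obtain ⟨_, -, hxy⟩ := hirr x y
  obtain ⟨t, k, hxk⟩ := exists_pow_diagonal_mul_mul_apply_pos hMnn hrow hd
    (reflTransGen_of_pow_apply_pos hMnn hxy) hy
  obtain ⟨η, hη, hbound⟩ := exists_pow_add_mul_apply_ge hB
    (one_sub_diagonal_mul_nonneg hMnn fun i => (hd i).2) hρ hδ hwin hxk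
  obtain ⟨a, hal, -⟩ := hwin 0
  exact ⟨η, hη, x, k, l, hal.trans_le' (Nat.zero_le a), t, hbound⟩

theorem stmt_10 {m : ℕ} (M : Matrix (Fin m) (Fin m) ℝ)
    (hMnn : ∀ i j, 0 ≤ M i j) (hrow : ∀ i, ∑ j, M i j = 1) (hirr : Irred M)
    (d : Fin m → ℝ) (hd : ∀ i, 0 ≤ d i ∧ d i ≤ 1)
    (hD0 : ∃ i, d i ≠ 0) (hDI : ∃ i, d i ≠ 1)
    (hρ : 0 < specRadR (Matrix.diagonal d * M)) :
    ∃ η : ℝ, 0 < η ∧ ∃ j k : Fin m, ∃ l : ℕ, 0 < l ∧ ∃ N : ℕ,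
      ∀ i : ℕ, N ≤ i → ∃ l' : ℕ, l' < l ∧
        η * specRadR (Matrix.diagonal d * M) ^ i ≤
          ((Matrix.diagonal d * M) ^ (i + l') *
            ((1 - Matrix.diagonal d) * M)) j k :=
  stmt_10_general M hMnn hrow hirr d hd hDI hρ
end
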